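/- arXiv:math/0311129 — 7 statements merged into one kernel-verified Lean document; each statement's English description precedes it below -/
import Mathlib

section
/- Let Γ be a finite set of n distinct points in projective m-space over a field K, and let e_j : R_j → K^n be the map evaluating homogeneous polynomials of degree j at the points of Γ (with fixed nonvanishing representatives chosen for each point). Then for every j ≥ n - 1, the map e_j is surjective; equivalently, Γ imposes independent conditions on forms of degree j. -/
open MvPolynomial

/-- Evaluation of homogeneous degree-`a` polynomials at fixed representatives of
`n` points of `ℙ^m`. -/
noncomputable def evalMap (K : Type) [Field K] (m n a : ℕ)
    (p : Fin n → Fin (m+1) → K) :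
    homogeneousSubmodule (Fin (m+1)) K a →ₗ[K] (Fin n → K) where
  toFun f i := eval (p i) (f : MvPolynomial (Fin (m+1)) K)
  map_add' f g := by ext i; simp
  map_smul' c f := by ext i; simp [smul_eval]


lemma key (K : Type) [Field K] (m n : ℕ) (p : Fin n → Fin (m+1) → K)
    (hp0 : ∀ i, p i ≠ 0)
    (hdist : ∀ i j : Fin n, i ≠ j → ∀ c : K, p i ≠ c • p j)
    (j : ℕ) (hj : n - 1 ≤ j) (i : Fin n) :
    ∃ g : MvPolynomial (Fin (m+1)) K, g.IsHomogeneous j ∧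
      (∀ l : Fin n, l ≠ i → eval (p l) g = 0) ∧ eval (p i) g ≠ 0 := by
  have H : ∀ k : Fin n, k ≠ i → ∃ s t : Fin (m+1), p k s * p i t - p k t * p i s ≠ 0 := by
    intro k hk
    by_contra hc
    push_neg at hc
    obtain ⟨s, hs⟩ : ∃ s, p k s ≠ 0 := by
      by_contra h; push_neg at h; exact hp0 k (funext h)
    apply hdist i k (fun h => hk h.symm) (p i s / p k s)
    funext t
    have h2 : p k s * p i t = p k t * p i s := sub_eq_zero.mp (hc s t)
    simp only [Pi.smul_apply, smul_eq_mul]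
    field_simp
    linear_combination h2
  choose s t hst using H
  obtain ⟨s0, hs0⟩ : ∃ s0, p i s0 ≠ 0 := by
    by_contra h; push_neg at h; exact hp0 i (funext h)
  set e := j - (n - 1) with he
  set q : Fin n → MvPolynomial (Fin (m+1)) K := fun k =>
    if h : k ≠ i then C (p k (s k h)) * X (t k h) - C (p k (t k h)) * X (s k h) else 1 with hq
  refine ⟨(∏ k ∈ Finset.univ.erase i, q k) * (X s0)^e, ?_, ?_, ?_⟩
  · have h1 : (∏ k ∈ Finset.univ.erase i, q k).IsHomogeneous (n-1) := by
      have hcard : ∑ _k ∈ Finset.univ.erase i, 1 = n - 1 := by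
        simp [Finset.card_erase_of_mem]
      rw [← hcard]
      refine IsHomogeneous.prod _ _ _ ?_
      intro k hk
      have hki : k ≠ i := Finset.ne_of_mem_erase hk
      simp only [hq, dif_pos hki]
      exact ((isHomogeneous_X K _).C_mul _).sub ((isHomogeneous_X K _).C_mul _)
    have h2 : ((X s0 : MvPolynomial (Fin (m+1)) K)^e).IsHomogeneous e := by
      simpa using (isHomogeneous_X K s0).pow e
    have := h1.mul h2
    rwa [Nat.add_sub_cancel' hj] at this
  · intro l hl
    rw [map_mul, eval_prod, Finset.prod_eq_zero (Finset.mem_erase.mpr ⟨hl, Finset.mem_univ l⟩), zero_mul]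
    rw [show q l = C (p l (s l hl)) * X (t l hl) - C (p l (t l hl)) * X (s l hl) from dif_pos hl]
    simp only [map_sub, map_mul, eval_C, eval_X]
    ring
  · rw [map_mul, eval_prod]
    refine mul_ne_zero (Finset.prod_ne_zero_iff.mpr ?_) (by simpa using pow_ne_zero e hs0)
    intro k hk
    have hki : k ≠ i := Finset.ne_of_mem_erase hk
    rw [show q k = C (p k (s k hki)) * X (t k hki) - C (p k (t k hki)) * X (s k hki) from dif_pos hki]
    simpa only [map_sub, map_mul, eval_C, eval_X] using hst k hki

/-- A finite set of `n` distinct points of `ℙ^m` imposes independent conditions on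
forms of every degree `j ≥ n - 1`: the evaluation map `e_j` is surjective. -/
theorem stmt_0 (K : Type) [Field K] (m n : ℕ) (p : Fin n → Fin (m+1) → K)
    (hp0 : ∀ i, p i ≠ 0)
    (hdist : ∀ i j : Fin n, i ≠ j → ∀ c : K, p i ≠ c • p j) :
    ∀ j : ℕ, n - 1 ≤ j → Function.Surjective (evalMap K m n j p) := by
  intro j hj v
  choose g hg h0 hne using key K m n p hp0 hdist j hj
  refine ⟨∑ i : Fin n, (v i * (eval (p i) (g i))⁻¹) •
      (⟨g i, (mem_homogeneousSubmodule _ _).mpr (hg i)⟩ :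
        homogeneousSubmodule (Fin (m+1)) K j), ?_⟩
  funext l
  rw [map_sum]
  simp only [map_smul, Finset.sum_apply, Pi.smul_apply, smul_eq_mul]
  have hcoord : ∀ (F : homogeneousSubmodule (Fin (m+1)) K j) (l : Fin n),
      evalMap K m n j p F l = eval (p l) (F : MvPolynomial (Fin (m+1)) K) := fun F l => rfl
  simp only [hcoord]
  rw [Finset.sum_eq_single l]
  · rw [mul_assoc, inv_mul_cancel₀ (hne l), mul_one]
  · intro i _ hil
    rw [h0 i l (Ne.symm hil), mul_zero]
  · intro h
    exact absurd (Finset.mem_univ l) h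
end

section
/- Let Γ be a finite set of n distinct points in P^m over a field K and let C(Γ)_a be the associated evaluation code. For an integer i ≥ 1, the minimum distance of C(Γ)_a satisfies d(C(Γ)_a) ≥ n − i + 1 if and only if for every subset Γ' ⊆ Γ with |Γ'| = i one has dim_K (I_{Γ'})_a = dim_K (I_Γ)_a (equivalently h^0(𝓘_{Γ'}(a)) = h^0(𝓘_Γ(a))). -/
open MvPolynomial

/-- `h^0(𝓘_{Γ'}(a))`: dimension of the space of degree-`a` forms vanishing on the
subset of `Γ` indexed by `S`, i.e. of the kernel of the evaluation at those points. -/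
noncomputable def h0 (K : Type) [Field K] (m n a : ℕ) (p : Fin n → Fin (m+1) → K)
    (S : Finset (Fin n)) : ℕ :=
  Module.finrank K (LinearMap.ker
    ((LinearMap.funLeft K K (Subtype.val : {i // i ∈ S} → Fin n)).comp (evalMap K m n a p)))

instance fdHomog (K : Type) [Field K] (m a : ℕ) :
    FiniteDimensional K (homogeneousSubmodule (Fin (m+1)) K a) :=
  Submodule.finiteDimensional_of_le (S₂ := restrictTotalDegree (Fin (m+1)) K a)
    (fun _ hp => (mem_restrictTotalDegree _ _ _).2 hp.totalDegree_le)

noncomputable def kerS (K : Type) [Field K] (m n a : ℕ) (p : Fin n → Fin (m+1) → K)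
    (S : Finset (Fin n)) : Submodule K (homogeneousSubmodule (Fin (m+1)) K a) :=
  LinearMap.ker
    ((LinearMap.funLeft K K (Subtype.val : {i // i ∈ S} → Fin n)).comp (evalMap K m n a p))

lemma mem_kerS (K : Type) [Field K] (m n a : ℕ) (p : Fin n → Fin (m+1) → K)
    (S : Finset (Fin n)) (f : homogeneousSubmodule (Fin (m+1)) K a) :
    f ∈ kerS K m n a p S ↔ ∀ j ∈ S, evalMap K m n a p f j = 0 := by
  simp only [kerS, LinearMap.mem_ker, LinearMap.comp_apply, LinearMap.funLeft_apply,
    funext_iff]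
  constructor
  · intro h j hj; exact h ⟨j, hj⟩
  · intro h j; exact h j.1 j.2

lemma kerS_univ_le (K : Type) [Field K] (m n a : ℕ) (p : Fin n → Fin (m+1) → K)
    (S : Finset (Fin n)) : kerS K m n a p Finset.univ ≤ kerS K m n a p S := by
  intro f hf
  rw [mem_kerS] at hf ⊢
  exact fun j _ => hf j (Finset.mem_univ j)

/-- Hansen's criterion: for `i ≥ 1`, the minimum distance of the evaluation code
`C(Γ)_a` is at least `n - i + 1` iff `h^0(𝓘_{Γ'}(a)) = h^0(𝓘_Γ(a))` for every
subset `Γ' ⊆ Γ` with `|Γ'| = i`. -/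
theorem stmt_2 (K : Type) [Field K] [DecidableEq K] (m n a i : ℕ) (p : Fin n → Fin (m+1) → K)
    (hp0 : ∀ j, p j ≠ 0)
    (hdist : ∀ j k : Fin n, j ≠ k → ∀ c : K, p j ≠ c • p k)
    (hi : 1 ≤ i) :
    (∀ w ∈ LinearMap.range (evalMap K m n a p), w ≠ 0 → n - i + 1 ≤ hammingNorm w) ↔
      (∀ S : Finset (Fin n), S.card = i →
        h0 K m n a p S = h0 K m n a p Finset.univ) := by
  constructor
  · intro H S hS
    have hle := kerS_univ_le K m n a p S
    have heq : kerS K m n a p S = kerS K m n a p Finset.univ := by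
      refine le_antisymm ?_ hle
      intro f hf
      rw [mem_kerS]
      intro j _
      by_contra hne
      have hwne : evalMap K m n a p f ≠ 0 := fun h0 => hne (by rw [h0]; rfl)
      have h1 := H _ (LinearMap.mem_range_self _ f) hwne
      -- support of w is contained in Sᶜ
      have hsub : ({j | evalMap K m n a p f j ≠ 0} : Finset (Fin n)) ⊆ Sᶜ := by
        intro k hk
        simp only [Finset.mem_filter] at hk
        rw [Finset.mem_compl]
        intro hkS
        have hk' : evalMap K m n a p f k ≠ 0 := by simpa using hk
        exact hk' ((mem_kerS K m n a p S f).1 hf k hkS)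
      have hcard : hammingNorm (evalMap K m n a p f) ≤ n - i := by
        calc hammingNorm (evalMap K m n a p f) ≤ Sᶜ.card := Finset.card_le_card hsub
        _ = n - i := by rw [Finset.card_compl, hS, Fintype.card_fin]
      omega
    unfold h0
    rw [show ∀ T, (LinearMap.ker ((LinearMap.funLeft K K (Subtype.val : {x // x ∈ T} → Fin n)).comp
      (evalMap K m n a p))) = kerS K m n a p T from fun _ => rfl,
      show (LinearMap.ker ((LinearMap.funLeft K K
        (Subtype.val : {x // x ∈ (Finset.univ : Finset (Fin n))} → Fin n)).comp
        (evalMap K m n a p))) = kerS K m n a p Finset.univ from rfl, heq]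
  · intro H w hw hwne
    by_contra hlt
    push_neg at hlt
    obtain ⟨f, hf⟩ := hw
    have hnorm1 : 1 ≤ hammingNorm w := by
      rcases Nat.eq_zero_or_pos (hammingNorm w) with h | h
      · exact absurd (hammingNorm_eq_zero.1 h) hwne
      · exact h
    have hin : i ≤ n := by
      by_contra hni
      push_neg at hni
      omega
    have hnle : hammingNorm w ≤ n - i := by omega
    -- zero set
    have hZcard : i ≤ ({j | w j = 0} : Finset (Fin n)).card := by
      have : ({j | w j = 0} : Finset (Fin n)) = ({j | w j ≠ 0} : Finset (Fin n))ᶜ := by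
        ext k; simp
      rw [this, Finset.card_compl, Fintype.card_fin]
      have : hammingNorm w = ({j | w j ≠ 0} : Finset (Fin n)).card := rfl
      omega
    obtain ⟨S, hSsub, hScard⟩ := Finset.exists_subset_card_eq hZcard
    have hEq := H S hScard
    have hle := kerS_univ_le K m n a p S
    have heq : kerS K m n a p Finset.univ = kerS K m n a p S := by
      refine Submodule.eq_of_le_of_finrank_le hle ?_
      exact le_of_eq hEq
    have hfS : f ∈ kerS K m n a p S := by
      rw [mem_kerS]
      intro j hj
      have := hSsub hj
      simp only [Finset.mem_filter, Finset.mem_univ, true_and, Set.mem_setOf_eq] at this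
      rw [hf]
      exact this
    have hfu : f ∈ kerS K m n a p Finset.univ := heq ▸ hfS
    apply hwne
    rw [← hf]
    ext j
    exact (mem_kerS K m n a p Finset.univ f).1 hfu j (Finset.mem_univ j)
end

section
/- Let Γ ⊂ P^2 be a reduced complete intersection of two plane curves of degrees d_1, d_2 over a field, so |Γ| = d_1 d_2. Set s = d_1 + d_2 − 3. If Γ' ⊆ Γ satisfies |Γ'| ≥ d_1 d_2 − d_1 − d_2 + a + 2, then the projection map π : C(Γ)_a → C(Γ')_a obtained by deleting the coordinates corresponding to points of Γ \ Γ' is injective. -/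
open MvPolynomial

/-- `h^1(𝓘_{Γ''}(a))` for the subset of `Γ` indexed by `S`: the corank of the
degree-`a` evaluation map at those points. -/
noncomputable def h1 (K : Type) [Field K] (m n a : ℕ) (p : Fin n → Fin (m+1) → K)
    (S : Finset (Fin n)) : ℕ :=
  S.card - Module.finrank K (LinearMap.range
    ((LinearMap.funLeft K K (Subtype.val : {i // i ∈ S} → Fin n)).comp (evalMap K m n a p)))

/-! ### Auxiliary material -/

/-- A linear form with coefficient vector `c`. -/
noncomputable def linForm (K : Type) [Field K] (c : Fin 3 → K) : MvPolynomial (Fin 3) K :=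
  ∑ k, C (c k) * X k

lemma linForm_isHomogeneous (K : Type) [Field K] (c : Fin 3 → K) :
    (linForm K c).IsHomogeneous 1 :=
  MvPolynomial.IsHomogeneous.sum _ _ _ fun k _ => isHomogeneous_C_mul_X (c k) k

lemma linForm_eval (K : Type) [Field K] (c v : Fin 3 → K) :
    eval v (linForm K c) = ∑ k, c k * v k := by
  simp [linForm]

/-- Separation of distinct points of `ℙ²` by a linear form. -/
lemma exists_sep (K : Type) [Field K] {n : ℕ} (p : Fin n → Fin 3 → K)
    (hp0 : ∀ i, p i ≠ 0)
    (hdist : ∀ i j : Fin n, i ≠ j → ∀ c : K, p i ≠ c • p j)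
    {i j : Fin n} (hij : i ≠ j) :
    ∃ c : Fin 3 → K, (∑ k, c k * p j k) = 0 ∧ (∑ k, c k * p i k) ≠ 0 := by
  obtain ⟨k0, hk0⟩ : ∃ k, p j k ≠ 0 := by
    by_contra h
    push_neg at h
    exact hp0 j (funext h)
  by_contra h
  push_neg at h
  apply hdist i j hij (p i k0 / p j k0)
  funext l
  have hsum : ∀ v : Fin 3 → K,
      (∑ k, ((Pi.single l (p j k0) : Fin 3 → K) k - (Pi.single k0 (p j l) : Fin 3 → K) k) * v k)
        = p j k0 * v l - p j l * v k0 := by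
    intro v
    simp [sub_mul, Finset.sum_sub_distrib, Pi.single_apply, ite_mul]
  have h0 : (∑ k, ((Pi.single l (p j k0) : Fin 3 → K) k - (Pi.single k0 (p j l) : Fin 3 → K) k) * p j k) = 0 := by
    rw [hsum]; ring
  have h1 := h _ h0
  rw [hsum] at h1
  show p i l = (p i k0 / p j k0) * p j l
  field_simp
  linear_combination h1

/-- Surjectivity of evaluation at few points. -/
lemma eval_surj (K : Type) [Field K] {n : ℕ} (b : ℕ) (p : Fin n → Fin 3 → K)
    (hp0 : ∀ i, p i ≠ 0)
    (hdist : ∀ i j : Fin n, i ≠ j → ∀ c : K, p i ≠ c • p j)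
    (T : Finset (Fin n)) (hT : T.card ≤ b + 1) :
    LinearMap.range ((LinearMap.funLeft K K (Subtype.val : {i // i ∈ T} → Fin n)).comp
      (evalMap K 2 n b p)) = ⊤ := by
  classical
  rw [eq_top_iff]
  have hmem : ∀ i' : {x // x ∈ T}, (fun j => if i' = j then (1:K) else 0) ∈
      LinearMap.range ((LinearMap.funLeft K K (Subtype.val : {i // i ∈ T} → Fin n)).comp
        (evalMap K 2 n b p)) := by
    intro i'
    obtain ⟨i, hiT⟩ := i'
    -- nonvanishing linear form at `p i`
    obtain ⟨k1, hk1⟩ : ∃ k, p i k ≠ 0 := by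
      by_contra h
      push_neg at h
      exact hp0 i (funext h)
    set u : Fin 3 → K := Pi.single k1 1 with hu
    have hsep : ∀ j : Fin n, ∃ c : Fin 3 → K,
        (j ∈ T.erase i → (∑ k, c k * p j k) = 0) ∧ (∑ k, c k * p i k) ≠ 0 := by
      intro j
      by_cases hj : j ∈ T.erase i
      · obtain ⟨c, hc0, hc1⟩ := exists_sep K p hp0 hdist (Finset.mem_erase.mp hj).1.symm
        exact ⟨c, fun _ => hc0, hc1⟩
      · refine ⟨Pi.single k1 1, fun h => absurd h hj, ?_⟩
        simpa [Pi.single_apply] using hk1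
    choose c hc0 hci using hsep
    set T' := T.erase i with hT'
    have hcardT' : T'.card ≤ b := by
      have h2 : T'.card = T.card - 1 := by rw [hT']; exact Finset.card_erase_of_mem hiT
      omega
    set f0 : MvPolynomial (Fin 3) K :=
      (linForm K u) ^ (b - T'.card) * ∏ j ∈ T', linForm K (c j) with hf0def
    have hf0 : f0.IsHomogeneous b := by
      have hpow := (linForm_isHomogeneous K u).pow (b - T'.card)
      have hprod : (∏ j ∈ T', linForm K (c j)).IsHomogeneous T'.card := by
        simpa using MvPolynomial.IsHomogeneous.prod T' _ (fun _ => 1)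
          (fun j _ => linForm_isHomogeneous K (c j))
      have := hpow.mul hprod
      have heq : 1 * (b - T'.card) + T'.card = b := by omega
      rwa [heq] at this
    have heval : ∀ v : Fin 3 → K,
        eval v f0 = (∑ k, u k * v k) ^ (b - T'.card)
          * ∏ j ∈ T', ∑ k, c j k * v k := by
      intro v
      simp [hf0def, linForm_eval, map_pow, map_prod]
    have hvi : eval (p i) f0 ≠ 0 := by
      rw [heval]
      refine mul_ne_zero (pow_ne_zero _ ?_) (Finset.prod_ne_zero_iff.mpr fun j _ => hci j)
      simpa [hu, Pi.single_apply] using hk1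
    have hvj : ∀ j ∈ T, j ≠ i → eval (p j) f0 = 0 := by
      intro j hjT hjne
      rw [heval]
      apply mul_eq_zero_of_right
      exact Finset.prod_eq_zero (Finset.mem_erase.mpr ⟨hjne, hjT⟩)
        (hc0 j (Finset.mem_erase.mpr ⟨hjne, hjT⟩))
    refine ⟨(eval (p i) f0)⁻¹ • ⟨f0, (mem_homogeneousSubmodule _ _).mpr hf0⟩, ?_⟩
    funext j'
    simp only [LinearMap.comp_apply, LinearMap.funLeft_apply]
    show eval (p j'.val)
      ((((eval (p i) f0)⁻¹ • (⟨f0, (mem_homogeneousSubmodule _ _).mpr hf0⟩ :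
        homogeneousSubmodule (Fin 3) K b)) : homogeneousSubmodule (Fin 3) K b) :
        MvPolynomial (Fin 3) K) = _
    rw [Submodule.coe_smul, smul_eval]
    by_cases hj : (⟨i, hiT⟩ : {x // x ∈ T}) = j'
    · rw [if_pos hj, ← hj]
      exact inv_mul_cancel₀ hvi
    · rw [if_neg hj, hvj j'.val j'.2 (fun h => hj (Subtype.ext h.symm)), mul_zero]
  intro v _
  rw [pi_eq_sum_univ v]
  exact Submodule.sum_mem _ fun i' _ => Submodule.smul_mem _ _ (hmem i')

lemma h1_eq_zero (K : Type) [Field K] {n : ℕ} (b : ℕ) (p : Fin n → Fin 3 → K)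
    (hp0 : ∀ i, p i ≠ 0)
    (hdist : ∀ i j : Fin n, i ≠ j → ∀ c : K, p i ≠ c • p j)
    (T : Finset (Fin n)) (hT : T.card ≤ b + 1) :
    h1 K 2 n b p T = 0 := by
  unfold h1
  rw [eval_surj K b p hp0 hdist T hT, finrank_top]
  rw [Module.finrank_pi, Fintype.card_coe]
  omega

/-- Improved Hansen lemma in `ℙ²`: if `Γ` is a reduced complete intersection of two
curves of degrees `d₁, d₂` (so `|Γ| = d₁d₂`), `s = d₁ + d₂ - 3`, and
`Γ' ⊆ Γ` has `|Γ'| ≥ d₁d₂ - d₁ - d₂ + a + 2`, then the projection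
`C(Γ)_a → C(Γ')_a` is injective.  (The Cayley–Bacharach theorem is assumed as
hypothesis `hCB`.) -/
theorem stmt_3 (K : Type) [Field K] (d1 d2 a s n : ℕ)
    (hn : n = d1 * d2) (hs : s + 3 = d1 + d2)
    (p : Fin n → Fin 3 → K)
    (hp0 : ∀ i, p i ≠ 0)
    (hdist : ∀ i j : Fin n, i ≠ j → ∀ c : K, p i ≠ c • p j)
    (F1 F2 : MvPolynomial (Fin 3) K)
    (hF1 : F1.IsHomogeneous d1) (hF2 : F2.IsHomogeneous d2)
    (hlocus : ∀ v : Fin 3 → K, v ≠ 0 →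
      ((eval v F1 = 0 ∧ eval v F2 = 0) ↔ ∃ (j : Fin n) (c : K), c ≠ 0 ∧ v = c • p j))
    (hCB : ∀ (S : Finset (Fin n)) (b : ℕ), b ≤ s →
      h0 K 2 n b p S = h0 K 2 n b p Finset.univ + h1 K 2 n (s - b) p Sᶜ)
    (S : Finset (Fin n))
    (hS : (d1 * d2 : ℤ) - d1 - d2 + a + 2 ≤ (S.card : ℤ)) :
    ∀ w ∈ LinearMap.range (evalMap K 2 n a p), (∀ i ∈ S, w i = 0) → w = 0 := by
  classical
  -- arithmetic consequence of `hS`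
  have hkey : n + a + 2 ≤ S.card + s + 3 := by
    have h2 : (d1:ℤ) + d2 = (s:ℤ) + 3 := by exact_mod_cast hs.symm
    have h3 : (n:ℤ) = (d1:ℤ) * d2 := by exact_mod_cast hn
    have : (n:ℤ) + a + 2 ≤ (S.card:ℤ) + s + 3 := by linarith
    exact_mod_cast this
  by_cases ha : a ≤ s
  · -- main case
    have hScard : S.card ≤ n := by
      simpa using Finset.card_le_univ S
    have hTcard : Sᶜ.card ≤ (s - a) + 1 := by
      rw [Finset.card_compl, Fintype.card_fin]
      omega
    have hh1 : h1 K 2 n (s - a) p Sᶜ = 0 :=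
      h1_eq_zero K (s - a) p hp0 hdist Sᶜ hTcard
    have hh0 : h0 K 2 n a p S = h0 K 2 n a p Finset.univ := by
      rw [hCB S a ha, hh1, add_zero]
    -- finite dimensionality of the space of homogeneous forms
    haveI hfd : FiniteDimensional K (homogeneousSubmodule (Fin 3) K a) := by
      refine Submodule.finiteDimensional_of_le
        (S₂ := restrictTotalDegree (Fin 3) K a) fun f hf => ?_
      rw [mem_restrictTotalDegree]
      exact ((mem_homogeneousSubmodule _ _).mp hf).totalDegree_le
    set E := evalMap K 2 n a p with hE
    set KS := LinearMap.ker
      ((LinearMap.funLeft K K (Subtype.val : {i // i ∈ S} → Fin n)).comp E) with hKS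
    set KU := LinearMap.ker
      ((LinearMap.funLeft K K
        (Subtype.val : {i // i ∈ (Finset.univ : Finset (Fin n))} → Fin n)).comp E) with hKU
    have hle : KU ≤ KS := by
      intro f hf
      rw [hKU, LinearMap.mem_ker] at hf
      rw [hKS, LinearMap.mem_ker]
      funext j'
      have := congrFun hf ⟨j'.1, Finset.mem_univ _⟩
      simpa [LinearMap.funLeft_apply] using this
    have heq : KU = KS := by
      apply Submodule.eq_of_le_of_finrank_eq hle
      exact hh0.symm
    intro w hw hvan
    obtain ⟨f, rfl⟩ := hw
    have hfS : f ∈ KS := by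
      rw [hKS, LinearMap.mem_ker]
      funext j'
      simpa [LinearMap.funLeft_apply] using hvan j'.1 j'.2
    rw [← heq, hKU, LinearMap.mem_ker] at hfS
    funext i
    have := congrFun hfS ⟨i, Finset.mem_univ _⟩
    simpa [LinearMap.funLeft_apply] using this
  · -- degenerate case: `S` is everything
    have hSall : ∀ i : Fin n, i ∈ S := by
      have hcard : S.card = Fintype.card (Fin n) := by
        have := Finset.card_le_univ S
        simp only [Fintype.card_fin] at *
        omega
      intro i
      rw [Finset.eq_univ_of_card S hcard]
      exact Finset.mem_univ i
    intro w _ hvan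
    funext i
    exact hvan i (hSall i)
end

section
/- Let Γ ⊂ P^m be a reduced complete intersection of hypersurfaces of degrees d_1,…,d_m over F_q, and set s = (Σ d_i) − m − 1. If 1 ≤ a ≤ s, then the evaluation code C(Γ)_a has minimum distance d ≥ (Σ d_i) − a − (m−1) = s − a + 2. -/
open MvPolynomial

/-!
Let `f` be a form of degree `a` whose vector of values `w` is nonzero with support `T`. If
`|T| ≤ s - a + 1`, then the points of `T` impose independent conditions on forms of degree `s - a`
(products of linear forms separate them), i.e. `h¹(𝓘_T(s - a)) = 0`. Cayley–Bacharach for the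
complementary subsets `Tᶜ` and `T` then gives `h⁰(𝓘_{Tᶜ}(a)) = h⁰(𝓘_Γ(a))`, whereas `f` vanishes on
`Tᶜ` but not on `Γ`.
-/

section Forms

variable {σ K : Type*} [Field K]

instance [Finite σ] (a : ℕ) : FiniteDimensional K (homogeneousSubmodule σ K a) :=
  Module.Finite.iff_fg.mpr (homogeneousSubmodule_fg σ K a)

lemma exists_linearForm_eval_eq_zero_ne_zero {u v : σ → K} (hv : v ≠ 0)
    (huv : ∀ c : K, u ≠ c • v) :
    ∃ L : MvPolynomial σ K, L.IsHomogeneous 1 ∧ eval v L = 0 ∧ eval u L ≠ 0 := by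
  obtain ⟨k₀, hk₀⟩ := Function.ne_iff.1 hv
  obtain ⟨k, hk⟩ := Function.ne_iff.1 (huv (u k₀ / v k₀))
  refine ⟨C (v k₀) * X k - C (v k) * X k₀,
    (isHomogeneous_C_mul_X _ _).sub (isHomogeneous_C_mul_X _ _), by simp [mul_comm], ?_⟩
  simp only [map_sub, map_mul, eval_C, eval_X]
  intro h
  apply hk
  rw [Pi.smul_apply, smul_eq_mul, div_mul_eq_mul_div, eq_div_iff (by simpa using hk₀)]
  linear_combination h

lemma exists_isHomogeneous_eval_ne_zero_of_card_le {ι : Type*} (p : ι → σ → K)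
    {T : Finset ι} {b : ℕ} (hcard : T.card ≤ b + 1) (hp₀ : ∀ i ∈ T, p i ≠ 0) {j : ι}
    (hj : j ∈ T) (hdist : ∀ i ∈ T, i ≠ j → ∀ c : K, p j ≠ c • p i) :
    ∃ G : MvPolynomial σ K, G.IsHomogeneous b ∧ eval (p j) G ≠ 0 ∧
      ∀ i ∈ T, i ≠ j → eval (p i) G = 0 := by
  classical
  have hsep : ∀ i ∈ T.erase j, ∃ L : MvPolynomial σ K,
      L.IsHomogeneous 1 ∧ eval (p i) L = 0 ∧ eval (p j) L ≠ 0 := fun i hi =>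
    exists_linearForm_eval_eq_zero_ne_zero (hp₀ i (Finset.mem_of_mem_erase hi))
      (hdist i (Finset.mem_of_mem_erase hi) (Finset.ne_of_mem_erase hi))
  choose L hL₁ hL₂ hL₃ using hsep
  obtain ⟨k, hk⟩ := Function.ne_iff.1 (hp₀ j hj)
  have hprod : (∏ i ∈ (T.erase j).attach, L i.1 i.2).IsHomogeneous (T.card - 1) := by
    simpa [Finset.card_erase_of_mem hj] using
      IsHomogeneous.prod (T.erase j).attach (fun i => L i.1 i.2) (fun _ => 1)
        (fun i _ => hL₁ i.1 i.2)
  -- pad the product of the separating linear forms to degree `b` by a coordinate nonzero at `p j`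
  refine ⟨(∏ i ∈ (T.erase j).attach, L i.1 i.2) * X k ^ (b - (T.card - 1)), ?_, ?_, ?_⟩
  · simpa [Nat.add_sub_cancel' (by omega : T.card - 1 ≤ b)] using
      hprod.mul (isHomogeneous_X_pow k (b - (T.card - 1)))
  · simp only [map_mul, map_prod, map_pow, eval_X]
    exact mul_ne_zero (Finset.prod_ne_zero_iff.2 fun i _ => hL₃ i.1 i.2) (pow_ne_zero _ hk)
  · intro i hi hij
    have hi' : i ∈ T.erase j := Finset.mem_erase.2 ⟨hij, hi⟩
    simp only [map_mul, map_prod]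
    exact mul_eq_zero_of_left (Finset.prod_eq_zero (Finset.mem_attach _ ⟨i, hi'⟩) (hL₂ i hi')) _

end Forms

section EvaluationCode

noncomputable abbrev evalOn (K : Type) [Field K] (m n a : ℕ) (p : Fin n → Fin (m+1) → K)
    (S : Finset (Fin n)) :
    homogeneousSubmodule (Fin (m+1)) K a →ₗ[K] ({i // i ∈ S} → K) :=
  (LinearMap.funLeft K K (Subtype.val : {i // i ∈ S} → Fin n)).comp (evalMap K m n a p)

variable {K : Type} [Field K] {m n : ℕ}

lemma mem_ker_evalOn {a : ℕ} {p : Fin n → Fin (m+1) → K} {S : Finset (Fin n)}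
    {f : homogeneousSubmodule (Fin (m+1)) K a} :
    f ∈ LinearMap.ker (evalOn K m n a p S) ↔ ∀ i ∈ S, evalMap K m n a p f i = 0 := by
  simp [funext_iff, LinearMap.funLeft_apply]

lemma evalOn_surjective_of_card_le (p : Fin n → Fin (m+1) → K) (hp₀ : ∀ i, p i ≠ 0)
    (hdist : ∀ i j : Fin n, i ≠ j → ∀ c : K, p i ≠ c • p j)
    {S : Finset (Fin n)} {b : ℕ} (hcard : S.card ≤ b + 1) :
    Function.Surjective (evalOn K m n b p S) := by
  classical
  rw [← LinearMap.range_eq_top, eq_top_iff, ← (Pi.basisFun K {i // i ∈ S}).span_eq,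
    Submodule.span_le]
  rintro _ ⟨j, rfl⟩
  obtain ⟨G, hG, hGj, hGi⟩ := exists_isHomogeneous_eval_ne_zero_of_card_le p hcard
    (fun i _ => hp₀ i) j.2 (fun i _ hij c => hdist j i (Ne.symm hij) c)
  refine ⟨(eval (p j) G)⁻¹ • ⟨G, hG⟩, funext fun i => ?_⟩
  by_cases hij : i = j
  · subst hij
    simp [evalMap, LinearMap.funLeft_apply, inv_mul_cancel₀ hGj]
  · simp [evalMap, LinearMap.funLeft_apply, hij,
      hGi i i.2 (Subtype.coe_ne_coe.2 hij)]

lemma h1_eq_zero_of_card_le (p : Fin n → Fin (m+1) → K) (hp₀ : ∀ i, p i ≠ 0)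
    (hdist : ∀ i j : Fin n, i ≠ j → ∀ c : K, p i ≠ c • p j)
    {S : Finset (Fin n)} {b : ℕ} (hcard : S.card ≤ b + 1) :
    h1 K m n b p S = 0 := by
  rw [h1, LinearMap.range_eq_top.2 (evalOn_surjective_of_card_le p hp₀ hdist hcard),
    finrank_top, Module.finrank_pi, Fintype.card_coe, Nat.sub_self]

lemma h0_univ_lt_h0 {a : ℕ} {p : Fin n → Fin (m+1) → K} {S : Finset (Fin n)}
    {f : homogeneousSubmodule (Fin (m+1)) K a} (hf : evalMap K m n a p f ≠ 0)
    (hfS : ∀ i ∈ S, evalMap K m n a p f i = 0) :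
    h0 K m n a p Finset.univ < h0 K m n a p S := by
  refine Submodule.finrank_lt_finrank_of_lt (SetLike.lt_iff_le_and_exists.2
    ⟨fun g hg => mem_ker_evalOn.2 fun i _ => mem_ker_evalOn.1 hg i (Finset.mem_univ i),
      f, mem_ker_evalOn.2 hfS, fun hf' => hf (funext fun i => ?_)⟩)
  exact mem_ker_evalOn.1 hf' i (Finset.mem_univ i)

end EvaluationCode

theorem stmt_4_general (K : Type) [Field K] [DecidableEq K]
    (m n s a : ℕ)
    (has : a ≤ s)
    (p : Fin n → Fin (m+1) → K)
    (hp0 : ∀ i, p i ≠ 0)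
    (hdist : ∀ i j : Fin n, i ≠ j → ∀ c : K, p i ≠ c • p j)
    (hCB : ∀ (S : Finset (Fin n)) (b : ℕ), b ≤ s →
      h0 K m n b p S = h0 K m n b p Finset.univ + h1 K m n (s - b) p Sᶜ) :
    ∀ w ∈ LinearMap.range (evalMap K m n a p), w ≠ 0 → s - a + 2 ≤ hammingNorm w := by
  rintro _ ⟨f, rfl⟩ hw
  set T : Finset (Fin n) := {i | evalMap K m n a p f i ≠ 0}
  by_contra! hT
  change T.card < s - a + 2 at hT
  have hh1 : h1 K m n (s - a) p T = 0 := h1_eq_zero_of_card_le p hp0 hdist (by omega)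
  have hCBa := hCB Tᶜ a has
  rw [compl_compl, hh1, add_zero] at hCBa
  have hlt : h0 K m n a p Finset.univ < h0 K m n a p Tᶜ :=
    h0_univ_lt_h0 hw fun i hi => by simpa [T] using hi
  omega

/-- Main theorem: if `Γ ⊂ ℙ^m` is a reduced complete intersection of hypersurfaces
of degrees `d₁, …, d_m` over a finite field, `s = (Σ dᵢ) - m - 1`, and `1 ≤ a ≤ s`,
then every nonzero codeword of the evaluation code `C(Γ)_a` has Hamming weight at
least `s - a + 2 = (Σ dᵢ) - a - (m - 1)`.  (Cayley–Bacharach is hypothesis `hCB`.) -/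
theorem stmt_4 (K : Type) [Field K] [Fintype K] [DecidableEq K]
    (m n s a : ℕ) (d : Fin m → ℕ)
    (hn : n = ∏ i, d i) (hs : s + m + 1 = ∑ i, d i)
    (ha1 : 1 ≤ a) (has : a ≤ s)
    (p : Fin n → Fin (m+1) → K)
    (hp0 : ∀ i, p i ≠ 0)
    (hdist : ∀ i j : Fin n, i ≠ j → ∀ c : K, p i ≠ c • p j)
    (F : Fin m → MvPolynomial (Fin (m+1)) K)
    (hF : ∀ i, (F i).IsHomogeneous (d i))
    (hlocus : ∀ v : Fin (m+1) → K, v ≠ 0 →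
      ((∀ i, eval v (F i) = 0) ↔ ∃ (j : Fin n) (c : K), c ≠ 0 ∧ v = c • p j))
    (hCB : ∀ (S : Finset (Fin n)) (b : ℕ), b ≤ s →
      h0 K m n b p S = h0 K m n b p Finset.univ + h1 K m n (s - b) p Sᶜ) :
    ∀ w ∈ LinearMap.range (evalMap K m n a p), w ≠ 0 → s - a + 2 ≤ hammingNorm w :=
  stmt_4_general K m n s a has p hp0 hdist hCB
end

section
/- Let Γ ⊂ P^m be a reduced zero-dimensional complete intersection with s = (Σ d_i) − m − 1. The evaluation code C(Γ)_a is MDS if and only if h^1(𝓘_{Γ''}(s−a)) = 0 for every subset Γ'' ⊆ Γ with |Γ''| = h^1(𝓘_Γ(a)). -/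
open MvPolynomial

/-!
By the weight criterion, `C(Γ)_a` is MDS iff no nonzero codeword vanishes on a subset `T ⊆ Γ`
with `|T| = k = dim C(Γ)_a`, i.e. iff `h⁰(𝓘_T(a)) = h⁰(𝓘_Γ(a))` for all such `T`. For `a ≤ s`,
Cayley–Bacharach identifies the defect `h⁰(𝓘_T(a)) - h⁰(𝓘_Γ(a))` with `h¹(𝓘_{Γ∖T}(s-a))`, and
`Γ ∖ T` runs over the subsets of size `n - k = h¹(𝓘_Γ(a))`.

For `a > s` both sides hold because evaluation in degree `a` is onto: Cayley–Bacharach in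
degrees `0` and `s` says that degree-`s` forms take arbitrary values on `Γ ∖ {p_j}`, and
multiplying the indicator of `p_i` there by a linear form through `p_j` and a power of a
coordinate gives a degree-`a` form vanishing at every point of `Γ` except `p_i`.
-/

open Module

theorem forall_card_sub_add_one_le_hammingNorm_iff {ι : Type*} [Fintype ι] {β : ι → Type*}
    [∀ i, Zero (β i)] [∀ i, DecidableEq (β i)] (C : Set (∀ i, β i)) (k : ℕ) :
    (∀ w ∈ C, w ≠ 0 → Fintype.card ι - k + 1 ≤ hammingNorm w) ↔
      ∀ T : Finset ι, T.card = k → ∀ w ∈ C, (∀ i ∈ T, w i = 0) → w = 0 := by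
  have card_zeros (w : ∀ i, β i) :
      (Finset.univ.filter fun i => w i = 0).card = Fintype.card ι - hammingNorm w := by
    have := Finset.card_filter_add_card_filter_not (s := Finset.univ) (fun i => w i = 0)
    rw [Finset.card_univ] at this
    simp only [hammingNorm, ne_eq]
    omega
  constructor
  · intro hC T hT w hw hvan
    by_contra hw0
    have hT_zeros : T ⊆ Finset.univ.filter fun i => w i = 0 := fun i hi => by simp [hvan i hi]
    have := Finset.card_le_card hT_zeros
    have := hC w hw hw0
    have := card_zeros w
    have : hammingNorm w ≤ Fintype.card ι := hammingNorm_le_card_fintype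
    omega
  · intro hC w hw hw0
    by_contra! hlt
    have hk : k ≤ (Finset.univ.filter fun i => w i = 0).card := by
      have := hammingNorm_pos_iff.2 hw0
      rw [card_zeros]
      omega
    obtain ⟨T, hT_zeros, hT⟩ := Finset.exists_subset_card_eq hk
    exact hw0 (hC T hT w hw fun i hi => (Finset.mem_filter.1 (hT_zeros hi)).2)

theorem Finset.forall_card_eq_compl_iff {ι : Type*} [Fintype ι] [DecidableEq ι]
    {P : Finset ι → Prop} {k : ℕ} (hk : k ≤ Fintype.card ι) :
    (∀ T : Finset ι, T.card = k → P Tᶜ) ↔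
      ∀ S : Finset ι, S.card = Fintype.card ι - k → P S := by
  constructor
  · intro h S hS
    simpa using h Sᶜ (by rw [Finset.card_compl]; omega)
  · intro h T hT
    exact h Tᶜ (by rw [Finset.card_compl, hT])

instance MvPolynomial.instModuleFiniteHomogeneousSubmodule {σ R : Type*} [CommSemiring R]
    [Finite σ] (b : ℕ) : Module.Finite R (homogeneousSubmodule σ R b) :=
  Module.Finite.iff_fg.mpr (homogeneousSubmodule_fg σ R b)

theorem MvPolynomial.finrank_homogeneousSubmodule_zero (σ K : Type*) [Field K] :
    finrank K (homogeneousSubmodule σ K 0) = 1 := by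
  rw [homogeneousSubmodule_zero, Submodule.one_eq_span, finrank_span_singleton one_ne_zero]

theorem MvPolynomial.exists_isHomogeneous_eval_ne_zero {σ K : Type*} [Field K] {v : σ → K}
    (hv : v ≠ 0) (e : ℕ) : ∃ q : MvPolynomial σ K, q.IsHomogeneous e ∧ eval v q ≠ 0 := by
  obtain ⟨k, hk⟩ := Function.ne_iff.mp hv
  exact ⟨X k ^ e, isHomogeneous_X_pow k e, by simpa using pow_ne_zero e hk⟩

theorem MvPolynomial.exists_isHomogeneous_one_eval_eq_zero_ne_zero {σ K : Type*} [Fintype σ]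
    [Field K] {u v : σ → K} (huv : ∀ c : K, u ≠ c • v) :
    ∃ L : MvPolynomial σ K, L.IsHomogeneous 1 ∧ eval v L = 0 ∧ eval u L ≠ 0 := by
  classical
  have hu : u ∉ K ∙ v := fun h => by
    obtain ⟨c, hc⟩ := Submodule.mem_span_singleton.mp h
    exact huv c hc.symm
  obtain ⟨φ, hφu, hφv⟩ := Submodule.exists_dual_map_eq_bot_of_notMem hu inferInstance
  have eval_L (w : σ → K) : eval w (∑ t, C (φ (Pi.single t 1)) * X t) = φ w := by
    simp only [map_sum, map_mul, eval_C, eval_X, φ.pi_apply_eq_sum_univ w, smul_eq_mul, mul_comm]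
    refine Finset.sum_congr rfl fun t _ => ?_
    congr 2
    funext j
    simp [Pi.single_apply, eq_comm]
  refine ⟨∑ t, C (φ (Pi.single t 1)) * X t, ?_, ?_, ?_⟩
  · exact IsHomogeneous.sum _ _ _ fun t _ => by
      simpa using (isHomogeneous_C σ _).mul (isHomogeneous_X K t)
  · rw [eval_L]
    exact (Submodule.eq_bot_iff _).mp hφv _
      (Submodule.mem_map_of_mem (Submodule.mem_span_singleton_self v))
  · rwa [eval_L]

noncomputable abbrev evalMapOn (K : Type) [Field K] (m n a : ℕ) (p : Fin n → Fin (m+1) → K)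
    (S : Finset (Fin n)) : homogeneousSubmodule (Fin (m+1)) K a →ₗ[K] ({i // i ∈ S} → K) :=
  (LinearMap.funLeft K K (Subtype.val : {i // i ∈ S} → Fin n)).comp (evalMap K m n a p)

def CayleyBacharach (K : Type) [Field K] (m n s : ℕ) (p : Fin n → Fin (m+1) → K) : Prop :=
  ∀ (S : Finset (Fin n)) (b : ℕ), b ≤ s →
    h0 K m n b p S = h0 K m n b p Finset.univ + h1 K m n (s - b) p Sᶜ

section Evaluation

open LinearMap

variable {K : Type} [Field K] {m n : ℕ} (p : Fin n → Fin (m+1) → K)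

theorem finrank_range_evalMapOn_add_h0 (b : ℕ) (S : Finset (Fin n)) :
    finrank K (range (evalMapOn K m n b p S)) + h0 K m n b p S =
      finrank K (homogeneousSubmodule (Fin (m+1)) K b) :=
  finrank_range_add_finrank_ker _

theorem finrank_range_evalMapOn_le_card (b : ℕ) (S : Finset (Fin n)) :
    finrank K (range (evalMapOn K m n b p S)) ≤ S.card := by
  simpa using Submodule.finrank_le (range (evalMapOn K m n b p S))

theorem h1_eq_card_sub (b : ℕ) (S : Finset (Fin n)) :
    h1 K m n b p S = S.card - finrank K (range (evalMapOn K m n b p S)) :=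
  rfl

theorem h1_empty (b : ℕ) : h1 K m n b p ∅ = 0 := by
  simp [h1]

theorem h1_univ (b : ℕ) :
    h1 K m n b p Finset.univ = n - finrank K (range (evalMap K m n b p)) := by
  have hinj : Function.Injective
      (funLeft K K (Subtype.val : {i // i ∈ (Finset.univ : Finset (Fin n))} → Fin n)) :=
    funLeft_injective_of_surjective K K _ fun i => ⟨⟨i, Finset.mem_univ i⟩, rfl⟩
  rw [h1, range_comp, ((range (evalMap K m n b p)).equivMapOfInjective _ hinj).finrank_eq.symm]
  simp

theorem h0_eq_h0_univ_iff (b : ℕ) (T : Finset (Fin n)) :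
    h0 K m n b p T = h0 K m n b p Finset.univ ↔
      ∀ w ∈ range (evalMap K m n b p), (∀ i ∈ T, w i = 0) → w = 0 := by
  have hle : ker (evalMapOn K m n b p Finset.univ) ≤ ker (evalMapOn K m n b p T) :=
    fun f hf => funext fun i => congr_fun hf ⟨i, Finset.mem_univ _⟩
  have hker : h0 K m n b p T = h0 K m n b p Finset.univ ↔
      ker (evalMapOn K m n b p T) ≤ ker (evalMapOn K m n b p Finset.univ) :=
    ⟨fun h => (Submodule.eq_of_le_of_finrank_eq hle h.symm).ge,
      fun h => by rw [h0, h0, le_antisymm h hle]⟩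
  rw [hker]
  constructor
  · rintro h _ ⟨f, rfl⟩ hvan
    have hf : f ∈ ker (evalMapOn K m n b p T) := mem_ker.2 (funext fun i => hvan i i.2)
    funext i
    exact congr_fun (mem_ker.1 (h hf)) ⟨i, Finset.mem_univ i⟩
  · intro h f hf
    have hvan := h _ ⟨f, rfl⟩ fun j hj => congr_fun (mem_ker.1 hf) ⟨j, hj⟩
    exact mem_ker.2 (funext fun i => congr_fun hvan i)

theorem finrank_range_evalMapOn_zero {S : Finset (Fin n)} (hS : S.Nonempty) :
    finrank K (range (evalMapOn K m n 0 p S)) = 1 := by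
  have hle : finrank K (range (evalMapOn K m n 0 p S)) ≤ 1 :=
    (finrank_range_le _).trans (finrank_homogeneousSubmodule_zero _ K).le
  have hne : range (evalMapOn K m n 0 p S) ≠ ⊥ := by
    obtain ⟨j, hj⟩ := hS
    rw [Ne, range_eq_bot]
    intro h
    have := congr_fun (LinearMap.congr_fun h ⟨1, isHomogeneous_one _ _⟩) ⟨j, hj⟩
    simp [evalMap] at this
  have := Submodule.one_le_finrank_iff.2 hne
  omega

theorem h0_zero_empty : h0 K m n 0 p ∅ = 1 := by
  have h := finrank_range_evalMapOn_add_h0 p 0 ∅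
  have hle := finrank_range_evalMapOn_le_card p 0 ∅
  rw [finrank_homogeneousSubmodule_zero] at h
  rw [Finset.card_empty] at hle
  omega

theorem h0_zero_univ (hn : n ≠ 0) : h0 K m n 0 p Finset.univ = 0 := by
  have := finrank_range_evalMapOn_add_h0 p 0 Finset.univ
  rw [finrank_range_evalMapOn_zero p (Finset.univ_nonempty_iff.2 ⟨⟨0, by omega⟩⟩),
    finrank_homogeneousSubmodule_zero] at this
  omega

theorem h1_zero_singleton (j : Fin n) : h1 K m n 0 p {j} = 0 := by
  rw [h1_eq_card_sub, finrank_range_evalMapOn_zero p (Finset.singleton_nonempty j),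
    Finset.card_singleton]

end Evaluation

namespace CayleyBacharach

open LinearMap

variable {K : Type} [Field K] {m n s : ℕ} {p : Fin n → Fin (m+1) → K}

theorem finrank_range_evalMapOn_univ (hCB : CayleyBacharach K m n s p) (hn : n ≠ 0) :
    finrank K (range (evalMapOn K m n s p Finset.univ)) = n - 1 := by
  have h := hCB ∅ 0 (Nat.zero_le s)
  rw [h0_zero_empty, h0_zero_univ p hn, Finset.compl_empty, Nat.sub_zero, h1_eq_card_sub] at h
  have := finrank_range_evalMapOn_le_card p s Finset.univ
  simp only [Finset.card_univ, Fintype.card_fin] at h this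
  omega

theorem evalMapOn_compl_singleton_surjective (hCB : CayleyBacharach K m n s p) (j : Fin n) :
    Function.Surjective (evalMapOn K m n s p {j}ᶜ) := by
  have h := hCB {j}ᶜ s le_rfl
  rw [compl_compl, Nat.sub_self, h1_zero_singleton, add_zero] at h
  have := finrank_range_evalMapOn_add_h0 p s {j}ᶜ
  have := finrank_range_evalMapOn_add_h0 p s Finset.univ
  have := hCB.finrank_range_evalMapOn_univ (Fin.pos j).ne'
  rw [← range_eq_top]
  apply Submodule.eq_top_of_finrank_eq
  rw [finrank_fintype_fun_eq_card, Fintype.card_coe, Finset.card_compl, Finset.card_singleton,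
    Fintype.card_fin]
  omega

theorem exists_isHomogeneous_eval_ne_zero_eval_eq_zero (hCB : CayleyBacharach K m n s p)
    {a : ℕ} (hsa : s < a) (hp0 : ∀ i, p i ≠ 0)
    (hdist : ∀ i j : Fin n, i ≠ j → ∀ c : K, p i ≠ c • p j) (i₀ : Fin n) :
    ∃ g : MvPolynomial (Fin (m+1)) K,
      g.IsHomogeneous a ∧ eval (p i₀) g ≠ 0 ∧ ∀ i ≠ i₀, eval (p i) g = 0 := by
  classical
  by_cases hj : ∃ j, j ≠ i₀
  · obtain ⟨j, hj⟩ := hj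
    obtain ⟨f, hf⟩ :=
      hCB.evalMapOn_compl_singleton_surjective j fun i => if i.1 = i₀ then 1 else 0
    have hf_eval (i : Fin n) (hi : i ≠ j) : eval (p i) f.1 = if i = i₀ then 1 else 0 :=
      congr_fun hf ⟨i, by simpa using hi⟩
    obtain ⟨L, hL, hLj, hLi₀⟩ :=
      exists_isHomogeneous_one_eval_eq_zero_ne_zero (hdist i₀ j hj.symm)
    obtain ⟨q, hq, hqi₀⟩ := exists_isHomogeneous_eval_ne_zero (hp0 i₀) (a - s - 1)
    refine ⟨q * L * f, ?_, ?_, fun i hi => ?_⟩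
    · convert (hq.mul hL).mul f.2 using 1
      omega
    · simp [hf_eval i₀ hj.symm, hqi₀, hLi₀]
    · rcases eq_or_ne i j with rfl | hij
      · simp [hLj]
      · simp [hf_eval i hij, hi]
  · simp only [ne_eq, not_exists, not_not] at hj
    obtain ⟨q, hq, hqi₀⟩ := exists_isHomogeneous_eval_ne_zero (hp0 i₀) a
    exact ⟨q, hq, hqi₀, fun i hi => absurd (hj i) hi⟩

theorem evalMap_surjective (hCB : CayleyBacharach K m n s p) {a : ℕ} (hsa : s < a)
    (hp0 : ∀ i, p i ≠ 0) (hdist : ∀ i j : Fin n, i ≠ j → ∀ c : K, p i ≠ c • p j) :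
    Function.Surjective (evalMap K m n a p) := by
  classical
  rw [← range_eq_top, Submodule.eq_top_iff']
  intro w
  rw [pi_eq_sum_univ w]
  refine Submodule.sum_mem _ fun i₀ _ => Submodule.smul_mem _ _ ?_
  obtain ⟨g, hg, hgi₀, hg_ne⟩ :=
    hCB.exists_isHomogeneous_eval_ne_zero_eval_eq_zero hsa hp0 hdist i₀
  have heval :
      evalMap K m n a p ⟨g, hg⟩ = eval (p i₀) g • fun j => if i₀ = j then 1 else 0 := by
    funext i
    rcases eq_or_ne i i₀ with rfl | hi
    · simp [evalMap]
    · simp [evalMap, hg_ne i hi, hi.symm]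
  refine ⟨(eval (p i₀) g)⁻¹ • ⟨g, hg⟩, ?_⟩
  rw [map_smul, heval, smul_smul, inv_mul_cancel₀ hgi₀, one_smul]

end CayleyBacharach

theorem stmt_8_general (K : Type) [Field K] [DecidableEq K]
    (m n s a : ℕ)
    (p : Fin n → Fin (m+1) → K)
    (hp0 : ∀ i, p i ≠ 0)
    (hdist : ∀ i j : Fin n, i ≠ j → ∀ c : K, p i ≠ c • p j)
    (hCB : ∀ (S : Finset (Fin n)) (b : ℕ), b ≤ s →
      h0 K m n b p S = h0 K m n b p Finset.univ + h1 K m n (s - b) p Sᶜ) :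
    (∀ w ∈ LinearMap.range (evalMap K m n a p), w ≠ 0 →
        n - Module.finrank K (LinearMap.range (evalMap K m n a p)) + 1 ≤ hammingNorm w) ↔
      (∀ S : Finset (Fin n), S.card = h1 K m n a p Finset.univ →
        h1 K m n (s - a) p S = 0) := by
  set C := LinearMap.range (evalMap K m n a p) with hC_def
  rcases le_or_gt a s with has | hsa
  · have hC : finrank K C ≤ Fintype.card (Fin n) := by simpa using Submodule.finrank_le C
    have hMDS := forall_card_sub_add_one_le_hammingNorm_iff (C : Set (Fin n → K)) (finrank K C)
    have hcompl := Finset.forall_card_eq_compl_iff (P := fun S => h1 K m n (s - a) p S = 0) hC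
    simp only [SetLike.mem_coe, Fintype.card_fin] at hMDS hcompl
    rw [hMDS, h1_univ, ← hcompl]
    refine forall_congr' fun T => imp_congr_right fun _ => ?_
    rw [← h0_eq_h0_univ_iff, hCB T a has, add_eq_left]
  · have hC : C = ⊤ :=
      LinearMap.range_eq_top.2 (CayleyBacharach.evalMap_surjective hCB hsa hp0 hdist)
    rw [h1_univ, ← hC_def, hC, finrank_top, finrank_fin_fun, Nat.sub_self]
    constructor
    · intro _ S hS
      rw [Finset.card_eq_zero.1 hS, h1_empty]
    · intro _ w _ hw0
      exact hammingNorm_pos_iff.2 hw0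

/-- MDS criterion for complete intersection codes: `C(Γ)_a` (a code of length
`n = |Γ|` and dimension `k = n - h¹(𝓘_Γ(a))`) is MDS — i.e. every nonzero codeword
has weight at least `n - k + 1` — iff `h¹(𝓘_{Γ''}(s-a)) = 0` for every subset
`Γ'' ⊆ Γ` with `|Γ''| = h¹(𝓘_Γ(a))`.  (Cayley–Bacharach is hypothesis `hCB`.) -/
theorem stmt_8 (K : Type) [Field K] [DecidableEq K]
    (m n s a : ℕ) (d : Fin m → ℕ)
    (hn : n = ∏ i, d i) (hs : s + m + 1 = ∑ i, d i)
    (p : Fin n → Fin (m+1) → K)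
    (hp0 : ∀ i, p i ≠ 0)
    (hdist : ∀ i j : Fin n, i ≠ j → ∀ c : K, p i ≠ c • p j)
    (F : Fin m → MvPolynomial (Fin (m+1)) K)
    (hF : ∀ i, (F i).IsHomogeneous (d i))
    (hlocus : ∀ v : Fin (m+1) → K, v ≠ 0 →
      ((∀ i, eval v (F i) = 0) ↔ ∃ (j : Fin n) (c : K), c ≠ 0 ∧ v = c • p j))
    (hCB : ∀ (S : Finset (Fin n)) (b : ℕ), b ≤ s →
      h0 K m n b p S = h0 K m n b p Finset.univ + h1 K m n (s - b) p Sᶜ) :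
    (∀ w ∈ LinearMap.range (evalMap K m n a p), w ≠ 0 →
        n - Module.finrank K (LinearMap.range (evalMap K m n a p)) + 1 ≤ hammingNorm w) ↔
      (∀ S : Finset (Fin n), S.card = h1 K m n a p Finset.univ →
        h1 K m n (s - a) p S = 0) :=
  stmt_8_general K m n s a p hp0 hdist hCB
end

section
/- Over F_q, the set of all q^m affine F_q-rational points of A^m, embedded in P^m as the locus x_0 ≠ 0, is the projective complete intersection V(x_j^q − x_0^{q−1} x_j : j = 1,…,m), and for a ≤ m(q−1) − 1 the generalized Reed–Muller evaluation code C(Γ)_a has minimum distance d ≥ m(q−1) − a + 1. -/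
/-!
A nonzero point satisfies `v_j ^ q = v_0 ^ (q - 1) * v_j` for all `j` iff `v_0 ≠ 0`: if `v_0 = 0`
the equations force `v = 0`, and conversely `c ^ (q - 1) = 1` and `x ^ q = x` on `𝔽_q`.

For the distance bound, dehomogenize at `x_0 = 1` and reduce every exponent modulo `x ^ q = x`;
neither step raises the degree or changes the values on `𝔽_q^m`. A nonzero reduced polynomial `g`
of degree `t` in `m + 1` variables has degree `d ≤ q - 1` in `x_0`; its leading coefficient has
degree `≤ t - d`, so by induction on `m` it is nonzero at `T ≥ m(q - 1) - t + d + 1` points, and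
over each of them `g` is nonzero for at least `q - d` values of `x_0`. Hence `g` is nonzero at
`≥ T(q - d) ≥ T + (q - d) - 1 ≥ (m + 1)(q - 1) - t + 1` points.
-/

open MvPolynomial Finset

/-- Evaluation of homogeneous degree-`a` polynomials at representatives of points
of `ℙ^m` indexed by a type `ι`. -/
noncomputable def evalMapI (K : Type) [Field K] (ι : Type) (m a : ℕ)
    (p : ι → Fin (m+1) → K) :
    homogeneousSubmodule (Fin (m+1)) K a →ₗ[K] (ι → K) where
  toFun f t := eval (p t) (f : MvPolynomial (Fin (m+1)) K)
  map_add' f g := by ext t; simp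
  map_smul' c f := by ext t; simp [smul_eval]

def reducedExponent (q n : ℕ) : ℕ := if n = 0 then 0 else (n - 1) % (q - 1) + 1

theorem reducedExponent_zero (q : ℕ) : reducedExponent q 0 = 0 := if_pos rfl

theorem reducedExponent_le_self (q n : ℕ) : reducedExponent q n ≤ n := by
  unfold reducedExponent
  split_ifs
  · omega
  · have := Nat.mod_le (n - 1) (q - 1); omega

theorem reducedExponent_lt {q : ℕ} (hq : 1 < q) (n : ℕ) : reducedExponent q n < q := by
  unfold reducedExponent
  split_ifs
  · omega
  · have := Nat.mod_lt (n - 1) (show 0 < q - 1 by omega); omega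

theorem FiniteField.pow_reducedExponent {K : Type*} [GroupWithZero K] [Fintype K] (x : K)
    (n : ℕ) : x ^ reducedExponent (Fintype.card K) n = x ^ n := by
  unfold reducedExponent
  split_ifs with hn
  · rw [hn]
  rcases eq_or_ne x 0 with rfl | hx
  · rw [zero_pow hn, zero_pow (by omega)]
  · set q := Fintype.card K
    obtain ⟨k, hk⟩ : ∃ k, n = (q - 1) * k + ((n - 1) % (q - 1) + 1) :=
      ⟨(n - 1) / (q - 1), by have := Nat.div_add_mod (n - 1) (q - 1); omega⟩
    conv_rhs => rw [hk, pow_add, pow_mul, pow_card_sub_one_eq_one x hx, one_pow, one_mul]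

namespace MvPolynomial

theorem totalDegree_le_of_mem_restrictDegree {R σ : Type*} [CommSemiring R] [Fintype σ]
    {p : MvPolynomial σ R} {n : ℕ} (hp : p ∈ restrictDegree σ R n) :
    p.totalDegree ≤ Fintype.card σ * n := by
  rw [mem_restrictDegree] at hp
  refine Finset.sup_le fun s hs => ?_
  calc (s.sum fun _ k => k) = ∑ i ∈ s.support, s i := rfl
    _ ≤ ∑ i, s i := sum_le_sum_of_subset (subset_univ _)
    _ ≤ ∑ _i : σ, n := sum_le_sum fun i _ => hp s hs i
    _ = Fintype.card σ * n := by simp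

section MapExponents

variable {R : Type*} [CommSemiring R] {σ τ : Type*}

noncomputable def mapExponents (e : (σ →₀ ℕ) → (τ →₀ ℕ)) (p : MvPolynomial σ R) :
    MvPolynomial τ R :=
  ∑ s ∈ p.support, monomial (e s) (coeff s p)

variable (e : (σ →₀ ℕ) → (τ →₀ ℕ)) (p : MvPolynomial σ R)

theorem eval_mapExponents {x : τ → R} {y : σ → R}
    (he : ∀ s, ((e s).prod fun i k => x i ^ k) = s.prod fun i k => y i ^ k) :
    eval x (mapExponents e p) = eval y p := by
  rw [mapExponents, map_sum, eval_eq]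
  exact sum_congr rfl fun s _ => by rw [eval_monomial, he]; rfl

theorem support_mapExponents_subset [DecidableEq τ] :
    (mapExponents e p).support ⊆ p.support.image e := by
  intro t ht
  obtain ⟨s, hs, ht⟩ := mem_biUnion.mp (support_sum ht)
  exact mem_image.mpr ⟨s, hs, (mem_singleton.mp (support_monomial_subset ht)).symm⟩

theorem totalDegree_mapExponents_le
    (he : ∀ s, ((e s).sum fun _ k => k) ≤ s.sum fun _ k => k) :
    (mapExponents e p).totalDegree ≤ p.totalDegree := by
  classical
  refine Finset.sup_le fun t ht => ?_
  obtain ⟨s, hs, rfl⟩ := mem_image.mp (support_mapExponents_subset e p ht)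
  exact (he s).trans (le_totalDegree hs)

theorem mapExponents_mem_restrictDegree {n : ℕ} (he : ∀ s i, e s i ≤ n) :
    mapExponents e p ∈ restrictDegree τ R n := by
  classical
  rw [mem_restrictDegree]
  intro t ht i
  obtain ⟨s, -, rfl⟩ := mem_image.mp (support_mapExponents_subset e p ht)
  exact he s i

end MapExponents

section Dehomogenize

variable {R : Type*} [CommSemiring R] {m : ℕ}

noncomputable def dehomogenize (f : MvPolynomial (Fin (m + 1)) R) : MvPolynomial (Fin m) R :=
  mapExponents Finsupp.tail f

theorem eval_dehomogenize (f : MvPolynomial (Fin (m + 1)) R) (u : Fin m → R) :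
    eval u (dehomogenize f) = eval (Fin.cons 1 u) f :=
  eval_mapExponents _ _ fun s => by
    simp only [Finsupp.prod_pow, Fin.prod_univ_succ, Fin.cons_zero, Fin.cons_succ, one_pow,
      one_mul, Finsupp.tail_apply]

theorem totalDegree_dehomogenize_le (f : MvPolynomial (Fin (m + 1)) R) :
    (dehomogenize f).totalDegree ≤ f.totalDegree :=
  totalDegree_mapExponents_le _ _ fun s => by
    rw [Finsupp.sum_fintype _ _ fun _ => rfl, Finsupp.sum_fintype _ _ fun _ => rfl,
      Fin.sum_univ_succ]
    exact le_add_self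

end Dehomogenize

section ReduceExponents

variable {K : Type*} [Field K] [Fintype K] {σ : Type*}

noncomputable def reduceExponents (p : MvPolynomial σ K) : MvPolynomial σ K :=
  mapExponents (Finsupp.mapRange (reducedExponent (Fintype.card K)) (reducedExponent_zero _)) p

theorem eval_reduceExponents (p : MvPolynomial σ K) (x : σ → K) :
    eval x p.reduceExponents = eval x p :=
  eval_mapExponents _ _ fun s => by
    rw [Finsupp.prod_mapRange_index fun _ => pow_zero _]
    exact Finsupp.prod_congr fun i _ => FiniteField.pow_reducedExponent _ _

theorem reduceExponents_mem_restrictDegree (p : MvPolynomial σ K) :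
    p.reduceExponents ∈ restrictDegree σ K (Fintype.card K - 1) :=
  mapExponents_mem_restrictDegree _ _ fun _ _ =>
    Nat.le_sub_one_of_lt (reducedExponent_lt Fintype.one_lt_card _)

theorem totalDegree_reduceExponents_le (p : MvPolynomial σ K) :
    p.reduceExponents.totalDegree ≤ p.totalDegree :=
  totalDegree_mapExponents_le _ _ fun s => by
    rw [Finsupp.sum_mapRange_index fun _ => rfl]
    exact Finsupp.sum_le_sum fun _ _ => reducedExponent_le_self _ _

end ReduceExponents

end MvPolynomial

theorem Fin.card_filter_eq_sum_card_filter_cons {α : Type*} [Fintype α] {n : ℕ}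
    (P : (Fin (n + 1) → α) → Prop) [DecidablePred P] :
    #{v | P v} = ∑ x : Fin n → α, #{x₀ : α | P (Fin.cons x₀ x)} := by
  simp only [card_filter]
  rw [← (Fin.consEquiv fun _ => α).sum_comp, Fintype.sum_prod_type, sum_comm]
  rfl

theorem Polynomial.card_sub_natDegree_le_card_eval_ne_zero {R : Type*} [CommRing R]
    [IsDomain R] [Fintype R] [DecidableEq R] {p : Polynomial R} (hp : p ≠ 0) :
    Fintype.card R - p.natDegree ≤ #{x | p.eval x ≠ 0} := by
  have hroots : #{x | p.eval x = 0} ≤ p.natDegree :=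
    card_le_degree_of_subset_roots fun x hx => by
      simpa [mem_roots hp] using mem_filter.mp hx
  have := card_filter_add_card_filter_not (s := univ) (fun x => p.eval x = 0)
  rw [card_univ] at this
  simp only [ne_eq]
  omega

namespace MvPolynomial

variable {K : Type} [Field K] [Fintype K] [DecidableEq K]

theorem card_sub_natDegree_le_card_eval_cons_ne_zero {m : ℕ} (g : MvPolynomial (Fin (m + 1)) K)
    {x : Fin m → K} (hx : eval x (finSuccEquiv K m g).leadingCoeff ≠ 0) :
    Fintype.card K - (finSuccEquiv K m g).natDegree ≤
      #{x₀ | eval (Fin.cons x₀ x : Fin (m + 1) → K) g ≠ 0} := by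
  have hcoeff : ((finSuccEquiv K m g).map (eval x)).coeff (finSuccEquiv K m g).natDegree ≠ 0 := by
    rwa [Polynomial.coeff_map]
  have hne : (finSuccEquiv K m g).map (eval x) ≠ 0 := by
    rintro h
    rw [h, Polynomial.coeff_zero] at hcoeff
    exact hcoeff rfl
  simp only [eval_eq_eval_mv_eval']
  exact (Nat.sub_le_sub_left Polynomial.natDegree_map_le _).trans
    (Polynomial.card_sub_natDegree_le_card_eval_ne_zero hne)

theorem le_card_eval_ne_zero_of_mem_restrictDegree {m : ℕ} {g : MvPolynomial (Fin m) K}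
    (hg : g ≠ 0) (hgr : g ∈ restrictDegree (Fin m) K (Fintype.card K - 1)) :
    m * (Fintype.card K - 1) - g.totalDegree + 1 ≤ #{x | eval x g ≠ 0} := by
  induction m with
  | zero =>
    obtain ⟨x, hx⟩ : ∃ x, eval x g ≠ 0 := by
      by_contra! h
      exact hg (eq_zero_of_eval_eq_zero (Fin 0) K g h hgr)
    simpa using card_pos.mpr ⟨x, mem_filter.mpr ⟨mem_univ x, hx⟩⟩
  | succ m ih =>
    set q := Fintype.card K
    have hq : 1 < q := Fintype.one_lt_card
    set p := finSuccEquiv K m g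
    set T : Finset (Fin m → K) := {x | eval x p.leadingCoeff ≠ 0}
    rw [mem_restrictDegree] at hgr
    have hp : p ≠ 0 := (map_ne_zero_iff _ (finSuccEquiv K m).injective).mpr hg
    have hlead : p.leadingCoeff ≠ 0 := Polynomial.leadingCoeff_ne_zero.mpr hp
    have hd : p.natDegree ≤ q - 1 := by
      rw [natDegree_finSuccEquiv, degreeOf_le_iff]
      exact fun s hs => hgr s hs 0
    have hlead_r : p.leadingCoeff ∈ restrictDegree (Fin m) K (q - 1) := by
      rw [mem_restrictDegree]
      intro s hs i
      simpa using hgr _ (mem_support_coeff_finSuccEquiv.mp hs) i.succ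
    have hdeg : p.leadingCoeff.totalDegree + p.natDegree ≤ g.totalDegree :=
      totalDegree_coeff_finSuccEquiv_add_le g _ hlead
    have hT : m * (q - 1) - p.leadingCoeff.totalDegree + 1 ≤ T.card := ih hlead hlead_r
    have hTle : p.leadingCoeff.totalDegree ≤ m * (q - 1) := by
      simpa using totalDegree_le_of_mem_restrictDegree hlead_r
    calc (m + 1) * (q - 1) - g.totalDegree + 1
        ≤ T.card + (q - p.natDegree) - 1 := by
          rw [add_one_mul]
          omega
      _ ≤ T.card * (q - p.natDegree) := Nat.add_sub_one_le_mul (by omega) (by omega)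
      _ = ∑ _x ∈ T, (q - p.natDegree) := by rw [sum_const, smul_eq_mul]
      _ ≤ ∑ x ∈ T, #{x₀ | eval (Fin.cons x₀ x : Fin (m + 1) → K) g ≠ 0} :=
          sum_le_sum fun x hx =>
            card_sub_natDegree_le_card_eval_cons_ne_zero g (mem_filter.mp hx).2
      _ ≤ ∑ x, #{x₀ | eval (Fin.cons x₀ x : Fin (m + 1) → K) g ≠ 0} :=
          sum_le_sum_of_subset (subset_univ T)
      _ = #{x | eval x g ≠ 0} := by rw [Fin.card_filter_eq_sum_card_filter_cons]

theorem le_card_eval_ne_zero {m : ℕ} {g : MvPolynomial (Fin m) K} (hg : ∃ x, eval x g ≠ 0) :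
    m * (Fintype.card K - 1) - g.totalDegree + 1 ≤ #{x | eval x g ≠ 0} := by
  have hne : g.reduceExponents ≠ 0 := by
    obtain ⟨x, hx⟩ := hg
    exact fun h => hx (by rw [← eval_reduceExponents, h, map_zero])
  calc m * (Fintype.card K - 1) - g.totalDegree + 1
      ≤ m * (Fintype.card K - 1) - g.reduceExponents.totalDegree + 1 := by
        have := totalDegree_reduceExponents_le g; omega
    _ ≤ #{x | eval x g.reduceExponents ≠ 0} :=
        le_card_eval_ne_zero_of_mem_restrictDegree hne (reduceExponents_mem_restrictDegree g)
    _ = #{x | eval x g ≠ 0} := by simp only [eval_reduceExponents]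

end MvPolynomial

theorem forall_pow_card_eq_iff_exists_smul_cons_one {K : Type*} [Field K] [Fintype K] {m : ℕ}
    {v : Fin (m + 1) → K} (hv : v ≠ 0) :
    (∀ j : Fin m, v j.succ ^ Fintype.card K = v 0 ^ (Fintype.card K - 1) * v j.succ) ↔
      ∃ (u : Fin m → K) (c : K), c ≠ 0 ∧ v = c • (Fin.cons 1 u : Fin (m + 1) → K) := by
  constructor
  · intro h
    have h0 : v 0 ≠ 0 := by
      intro h0
      refine hv (funext fun i => Fin.cases h0 (fun j => ?_) i)
      have hj := h j
      rwa [h0, zero_pow (Nat.sub_ne_zero_of_lt Fintype.one_lt_card), zero_mul,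
        pow_eq_zero_iff Fintype.card_ne_zero] at hj
    refine ⟨fun j => (v 0)⁻¹ * v j.succ, v 0, h0, funext fun i => ?_⟩
    refine Fin.cases ?_ (fun j => ?_) i <;> simp [h0]
  · rintro ⟨u, c, hc, rfl⟩ j
    simp only [Pi.smul_apply, Fin.cons_succ, Fin.cons_zero, smul_eq_mul, mul_one,
      FiniteField.pow_card, FiniteField.pow_card_sub_one_eq_one c hc, one_mul]

theorem stmt_12_general (K : Type) [Field K] [Fintype K] [DecidableEq K] (m a q : ℕ)
    (hq : q = Fintype.card K) :
    (∀ v : Fin (m+1) → K, v ≠ 0 →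
      ((∀ j : Fin m, eval v ((X j.succ) ^ q - (X 0) ^ (q-1) * X j.succ
          : MvPolynomial (Fin (m+1)) K) = 0) ↔
        ∃ (u : Fin m → K) (c : K), c ≠ 0 ∧ v = c • (Fin.cons 1 u : Fin (m+1) → K))) ∧
    ∀ w ∈ LinearMap.range
        (evalMapI K (Fin m → K) m a (fun u => (Fin.cons 1 u : Fin (m+1) → K))),
      w ≠ 0 → m * (q - 1) - a + 1 ≤ hammingNorm w := by
  subst hq
  refine ⟨fun v hv => ?_, ?_⟩
  · simpa only [map_sub, map_mul, map_pow, eval_X, sub_eq_zero]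
      using forall_pow_card_eq_iff_exists_smul_cons_one hv
  rintro w ⟨f, rfl⟩ hw
  set g := dehomogenize (f : MvPolynomial (Fin (m + 1)) K)
  have hg : ∀ u, evalMapI K (Fin m → K) m a (fun u => Fin.cons 1 u) f u = eval u g :=
    fun u => (eval_dehomogenize _ u).symm
  have hg_ne : ∃ u, eval u g ≠ 0 := by
    by_contra! h
    exact hw (funext fun u => (hg u).trans (h u))
  calc m * (Fintype.card K - 1) - a + 1
      ≤ m * (Fintype.card K - 1) - g.totalDegree + 1 := by
        have : g.totalDegree ≤ a := (totalDegree_dehomogenize_le _).trans f.2.totalDegree_le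
        omega
    _ ≤ #{u | eval u g ≠ 0} := le_card_eval_ne_zero hg_ne
    _ = hammingNorm _ := by simp only [hammingNorm, hg]

/-- Generalized Reed–Muller codes: over `𝔽_q`, the set `Γ` of all `q^m` affine
points `[1 : a₁ : ⋯ : a_m]` is the projective complete intersection
`V(x_j^q - x_0^{q-1}x_j : j = 1, …, m)`, and for `a ≤ m(q-1) - 1` every nonzero
codeword of `C(Γ)_a` has Hamming weight at least `m(q-1) - a + 1`. -/
theorem stmt_12 (K : Type) [Field K] [Fintype K] [DecidableEq K] (m a q : ℕ)
    (hq : q = Fintype.card K) (ha : a ≤ m * (q - 1) - 1) :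
    (∀ v : Fin (m+1) → K, v ≠ 0 →
      ((∀ j : Fin m, eval v ((X j.succ) ^ q - (X 0) ^ (q-1) * X j.succ
          : MvPolynomial (Fin (m+1)) K) = 0) ↔
        ∃ (u : Fin m → K) (c : K), c ≠ 0 ∧ v = c • (Fin.cons 1 u : Fin (m+1) → K))) ∧
    ∀ w ∈ LinearMap.range
        (evalMapI K (Fin m → K) m a (fun u => (Fin.cons 1 u : Fin (m+1) → K))),
      w ≠ 0 → m * (q - 1) - a + 1 ≤ hammingNorm w :=
  stmt_12_general K m a q hq
end

section
/- Let Γ ⊂ P^2 be a reduced complete intersection of curves of degrees d_1, d_2 over F_q with s = d_1 + d_2 − 3, and suppose 0 ≤ a ≤ s. Assume that for every subset Γ' ⊆ Γ with |Γ'| = d_1 d_2 − s + a − 1, the projection C(Γ)_a → C(Γ')_a is injective. Then the minimum distance of C(Γ)_a satisfies d ≥ s − a + 2. -/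
/-!
A nonzero codeword of weight at most `s - a + 1` has at least `d₁d₂ - s + a - 1` zeros, because
`d₁d₂ ≥ d₁ + d₂ - 1 = s + 2`; the projection onto that many of its zeros kills it, contradicting
injectivity.
-/

open MvPolynomial

theorem card_sub_add_one_le_hammingNorm {ι : Type*} [Fintype ι] {β : ι → Type*}
    [∀ i, Zero (β i)] [∀ i, DecidableEq (β i)] {w : ∀ i, β i} (m : ℕ)
    (hvanish : ∀ S : Finset ι, S.card = m → (∀ i ∈ S, w i = 0) → w = 0) (hw : w ≠ 0) :
    Fintype.card ι - m + 1 ≤ hammingNorm w := by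
  by_contra! hlt
  have hzeros : hammingNorm w + (Finset.univ.filter fun i => w i = 0).card = Fintype.card ι := by
    simpa [hammingNorm] using
      Finset.card_filter_add_card_filter_not (s := Finset.univ) (fun i => w i ≠ 0)
  have hpos : 0 < hammingNorm w := hammingNorm_pos_iff.mpr hw
  obtain ⟨S, hSzeros, hS⟩ :=
    Finset.exists_subset_card_eq (s := Finset.univ.filter fun i => w i = 0) (n := m) (by omega)
  exact hw (hvanish S hS fun i hi => (Finset.mem_filter.mp (hSzeros hi)).2)

theorem add_le_mul_add_one {d1 d2 : ℕ} (h1 : d1 ≠ 0) (h2 : d2 ≠ 0) : d1 + d2 ≤ d1 * d2 + 1 := by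
  obtain ⟨x, rfl⟩ := Nat.exists_eq_add_one_of_ne_zero h1
  obtain ⟨y, rfl⟩ := Nat.exists_eq_add_one_of_ne_zero h2
  nlinarith

theorem stmt_15_general (K : Type) [Field K] [DecidableEq K]
    (d1 d2 a s n : ℕ)
    (hn : n = d1 * d2) (hs : s + 3 = d1 + d2) (ha : a ≤ s)
    (p : Fin n → Fin 3 → K)
    (hinj : ∀ S : Finset (Fin n), (S.card : ℤ) = (d1 * d2 : ℤ) - s + a - 1 →
      ∀ w ∈ LinearMap.range (evalMap K 2 n a p), (∀ i ∈ S, w i = 0) → w = 0) :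
    ∀ w ∈ LinearMap.range (evalMap K 2 n a p), w ≠ 0 → s - a + 2 ≤ hammingNorm w := by
  intro w hw hw0
  have hn0 : n ≠ 0 := by
    rintro rfl
    exact hw0 (Subsingleton.elim _ _)
  have hsn : s + 2 ≤ n := by
    obtain ⟨h1, h2⟩ := mul_ne_zero_iff.mp (hn ▸ hn0)
    have := add_le_mul_add_one h1 h2
    omega
  have hcast : ((d1 : ℤ) * d2) = n := by exact_mod_cast hn.symm
  have := card_sub_add_one_le_hammingNorm (n + a - (s + 1)) (fun S hS hS0 =>
    hinj S (by rw [hS, hcast]; omega) w hw hS0) hw0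
  rw [Fintype.card_fin] at this
  omega

/-- The exchange argument: let `Γ ⊂ ℙ²` be a reduced complete intersection of
curves of degrees `d₁, d₂` over `𝔽_q`, `s = d₁ + d₂ - 3`, `0 ≤ a ≤ s`.  If the
projection `C(Γ)_a → C(Γ')_a` is injective for every `Γ' ⊆ Γ` with
`|Γ'| = d₁d₂ - s + a - 1`, then every nonzero codeword of `C(Γ)_a` has Hamming
weight at least `s - a + 2`. -/
theorem stmt_15 (K : Type) [Field K] [Fintype K] [DecidableEq K]
    (d1 d2 a s n : ℕ)
    (hn : n = d1 * d2) (hs : s + 3 = d1 + d2) (ha : a ≤ s)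
    (p : Fin n → Fin 3 → K)
    (hp0 : ∀ i, p i ≠ 0)
    (hdist : ∀ i j : Fin n, i ≠ j → ∀ c : K, p i ≠ c • p j)
    (F1 F2 : MvPolynomial (Fin 3) K)
    (hF1 : F1.IsHomogeneous d1) (hF2 : F2.IsHomogeneous d2)
    (hlocus : ∀ v : Fin 3 → K, v ≠ 0 →
      ((eval v F1 = 0 ∧ eval v F2 = 0) ↔ ∃ (j : Fin n) (c : K), c ≠ 0 ∧ v = c • p j))
    (hinj : ∀ S : Finset (Fin n), (S.card : ℤ) = (d1 * d2 : ℤ) - s + a - 1 →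
      ∀ w ∈ LinearMap.range (evalMap K 2 n a p), (∀ i ∈ S, w i = 0) → w = 0) :
    ∀ w ∈ LinearMap.range (evalMap K 2 n a p), w ≠ 0 → s - a + 2 ≤ hammingNorm w :=
  stmt_15_general K d1 d2 a s n hn hs ha p hinj
end
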